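/- arXiv:1103.2762 — 2 statements merged into one kernel-verified Lean document; each statement's English description precedes it below -/
import Mathlib

section
/- Let X be a Polish space and φ : X → [0,∞]. With U(φ) the least upper semi-continuous function exceeding φ modulo a meagre set, the following are equivalent: (1) φ ≥ U(φ) outside a meagre set; (2) φ = U(φ) outside a meagre set; (3) there exists an upper semi-continuous ψ with φ = ψ outside a meagre set; (4) φ is Baire measurable. -/
open scoped ENNReal

def GradedOpen {X : Type*} [TopologicalSpace X] (φ : X → ℝ≥0∞) : Prop :=
  ∀ r : ℝ≥0∞, IsOpen {x : X | φ x < r}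

/-- `φ ≤* ψ`: `φ ≤ ψ` outside a meagre set. -/
def LeAE {X : Type*} [TopologicalSpace X] (φ ψ : X → ℝ≥0∞) : Prop :=
  IsMeagre {x : X | ψ x < φ x}

/-- `φ =* ψ`: `φ = ψ` outside a meagre set. -/
def EqAE {X : Type*} [TopologicalSpace X] (φ ψ : X → ℝ≥0∞) : Prop :=
  IsMeagre {x : X | φ x ≠ ψ x}

/-- `U(φ)`: pointwise infimum of all u.s.c. functions `ψ` with `φ ≤* ψ`. -/
noncomputable def Ugr {X : Type*} [TopologicalSpace X] (φ : X → ℝ≥0∞) : X → ℝ≥0∞ :=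
  fun x => ⨅ ψ : {ψ : X → ℝ≥0∞ // GradedOpen ψ ∧ LeAE φ ψ}, ψ.val x

/-- Baire measurability of `[0,∞]`-valued functions: preimages of Borel sets
have the Baire property. -/
def BaireMeasurableFun {X : Type*} [TopologicalSpace X] (φ : X → ℝ≥0∞) : Prop :=
  ∀ s : Set ℝ≥0∞, MeasurableSet s → BaireMeasurableSet (φ ⁻¹' s)
/-!
Everything is read in the residual filter: `φ ≤* ψ` and `φ =* ψ` say `φ ≤ᶠ ψ` and `φ =ᶠ ψ`
there. By second countability, the sublevel set `{U(φ) < q}` is covered by countably many of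
the open sets `{ψ < q}`, so `φ ≤* U(φ)` always holds; this gives (1) ⇒ (2), and (3) ⇒ (1)
because `U(φ) ≤ ψ` for every admissible `ψ`. A u.s.c. function is Borel, which gives (3) ⇒ (4).
For (4) ⇒ (3), each `{φ < q}` with `q` rational agrees with an open set `u_q` modulo a meagre
set, and `ψ x = inf {q | x ∈ u_q}` is u.s.c. and agrees with `φ` off the countable union of
these meagre sets.
-/

open Filter Set

section

variable {X : Type*} [TopologicalSpace X]

lemma leAE_iff_eventuallyLE {φ ψ : X → ℝ≥0∞} : LeAE φ ψ ↔ φ ≤ᶠ[residual X] ψ := by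
  simp only [LeAE, IsMeagre, EventuallyLE, Filter.Eventually, compl_ofPred, not_lt]

lemma eqAE_iff_eventuallyEq {φ ψ : X → ℝ≥0∞} : EqAE φ ψ ↔ φ =ᶠ[residual X] ψ := by
  simp only [EqAE, IsMeagre, EventuallyEq, Filter.Eventually, compl_ofPred, not_not]

lemma GradedOpen.measurable [MeasurableSpace X] [OpensMeasurableSpace X] {ψ : X → ℝ≥0∞}
    (hψ : GradedOpen ψ) : Measurable ψ :=
  measurable_of_Iio fun r => (hψ r).measurableSet

lemma gradedOpen_iInf {ι : Sort*} {ψ : ι → X → ℝ≥0∞} (hψ : ∀ i, GradedOpen (ψ i)) :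
    GradedOpen fun x => ⨅ i, ψ i x := by
  intro r
  simp only [iInf_lt_iff, ofPred_exists]
  exact isOpen_iUnion fun i => hψ i r

lemma gradedOpen_iInf_mem {ι : Type*} (c : ι → ℝ≥0∞) {u : ι → Set X}
    (hu : ∀ i, IsOpen (u i)) : GradedOpen fun x => ⨅ (i) (_ : x ∈ u i), c i := by
  intro r
  have : {x | ⨅ (i) (_ : x ∈ u i), c i < r} = ⋃ (i) (_ : c i < r), u i := by
    ext x
    simp only [mem_ofPred_eq, iInf_lt_iff, mem_iUnion, exists_prop, and_comm]
  rw [this]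
  exact isOpen_biUnion fun i _ => hu i

lemma leAE_iInf [SecondCountableTopology X] {ι : Type*} {φ : X → ℝ≥0∞} {ψ : ι → X → ℝ≥0∞}
    (hψ : ∀ i, GradedOpen (ψ i)) (hφψ : ∀ i, LeAE φ (ψ i)) :
    LeAE φ fun x => ⨅ i, ψ i x := by
  choose T hT hTU using fun q : ℚ => TopologicalSpace.isOpen_iUnion_countable
    (fun i => {x | ψ i x < ENNReal.ofReal q}) fun i => hψ i _
  have hmeagre : IsMeagre (⋃ (q : ℚ) (i ∈ T q), {x | ψ i x < φ x}) := by
    refine isMeagre_iUnion fun q => ?_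
    have := (hT q).to_subtype
    rw [biUnion_eq_iUnion]
    exact isMeagre_iUnion fun i => hφψ i
  refine hmeagre.mono fun x (hx : ⨅ i, ψ i x < φ x) => ?_
  obtain ⟨q, -, hxq, hqφ⟩ := ENNReal.lt_iff_exists_rat_btwn.1 hx
  have hxq' : x ∈ ⋃ i, {x | ψ i x < ENNReal.ofReal q} := mem_iUnion.2 (iInf_lt_iff.1 hxq)
  rw [← hTU q] at hxq'
  simp only [mem_iUnion] at hxq' ⊢
  obtain ⟨i, hi, hψi⟩ := hxq'
  exact ⟨q, i, hi, hψi.trans hqφ⟩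

lemma gradedOpen_Ugr (φ : X → ℝ≥0∞) : GradedOpen (Ugr φ) :=
  gradedOpen_iInf fun ψ => ψ.2.1

lemma Ugr_le {φ ψ : X → ℝ≥0∞} (hψ : GradedOpen ψ) (hφψ : LeAE φ ψ) : Ugr φ ≤ ψ :=
  fun x => iInf_le (fun ρ : {ψ : X → ℝ≥0∞ // GradedOpen ψ ∧ LeAE φ ψ} => ρ.val x) ⟨ψ, hψ, hφψ⟩

lemma leAE_Ugr [SecondCountableTopology X] (φ : X → ℝ≥0∞) : LeAE φ (Ugr φ) :=
  leAE_iInf (fun ψ => ψ.2.1) fun ψ => ψ.2.2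

lemma BaireMeasurableFun.of_eqAE_gradedOpen {φ ψ : X → ℝ≥0∞} (hψ : GradedOpen ψ)
    (hφψ : EqAE φ ψ) : BaireMeasurableFun φ := by
  borelize X
  intro s hs
  refine (hψ.measurable hs).baireMeasurableSet.congr ?_
  filter_upwards [eqAE_iff_eventuallyEq.1 hφψ] with x hx
  change (ψ x ∈ s) = (φ x ∈ s)
  rw [hx]

lemma ENNReal.iInf_ofReal_rat_gt (a : ℝ≥0∞) :
    ⨅ (q : ℚ) (_ : a < ENNReal.ofReal q), ENNReal.ofReal q = a := by
  refine le_antisymm (le_of_forall_gt fun b hab => ?_) (le_iInf₂ fun q hq => hq.le)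
  obtain ⟨q, -, haq, hqb⟩ := ENNReal.lt_iff_exists_rat_btwn.1 hab
  exact (iInf₂_le q haq).trans_lt hqb

lemma BaireMeasurableFun.exists_gradedOpen_eqAE {φ : X → ℝ≥0∞} (hφ : BaireMeasurableFun φ) :
    ∃ ψ, GradedOpen ψ ∧ EqAE φ ψ := by
  choose u hu hφu using fun q : ℚ =>
    (hφ _ (measurableSet_Iio (a := ENNReal.ofReal q))).residualEq_isOpen
  refine ⟨fun x => ⨅ (q : ℚ) (_ : x ∈ u q), ENNReal.ofReal q, gradedOpen_iInf_mem _ hu,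
    eqAE_iff_eventuallyEq.2 ?_⟩
  filter_upwards [eventually_countable_forall.2 hφu] with x hx
  have hmem (q : ℚ) : x ∈ u q ↔ φ x < ENNReal.ofReal q := (Iff.of_eq (hx q)).symm
  simp only [hmem]
  exact (ENNReal.iInf_ofReal_rat_gt _).symm

end

/-- The following are equivalent: `φ ≥* U(φ)`; `φ =* U(φ)`; `φ =* ψ` for some
u.s.c. `ψ`; `φ` is Baire measurable. -/
theorem Ugr_tfae {X : Type*} [TopologicalSpace X] [PolishSpace X] (φ : X → ℝ≥0∞) :
    List.TFAE [LeAE (Ugr φ) φ,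
               EqAE φ (Ugr φ),
               ∃ ψ : X → ℝ≥0∞, GradedOpen ψ ∧ EqAE φ ψ,
               BaireMeasurableFun φ] := by
  tfae_have 1 → 2 := fun hUφ => eqAE_iff_eventuallyEq.2 <|
    (leAE_iff_eventuallyLE.1 (leAE_Ugr φ)).antisymm (leAE_iff_eventuallyLE.1 hUφ)
  tfae_have 2 → 3 := fun hφU => ⟨Ugr φ, gradedOpen_Ugr φ, hφU⟩
  tfae_have 3 → 1 := fun ⟨ψ, hψ, hφψ⟩ => by
    have hφψ' := eqAE_iff_eventuallyEq.1 hφψ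
    have hUψ := Ugr_le hψ (leAE_iff_eventuallyLE.2 hφψ'.le)
    exact leAE_iff_eventuallyLE.2 (EventuallyLE.trans_eq (.of_forall hUψ) hφψ'.symm)
  tfae_have 3 → 4 := fun ⟨_, hψ, hφψ⟩ => .of_eqAE_gradedOpen hψ hφψ
  tfae_have 4 → 3 := BaireMeasurableFun.exists_gradedOpen_eqAE
  tfae_finish
end

section
/- Let G be a Polish group and φ : G → [0,∞] a Baire measurable function which is non-meagre, meaning for every r > 0 the set {x : φ(x) < r} is non-meagre. Then the upper semi-continuous regularization of φ ⋄ φ^{⋄-1} vanishes at the identity: limsup_{y→1} (φ ⋄ φ^{⋄-1})(y) = 0, where φ^{⋄-1}(x) = φ(x⁻¹) and (α ⋄ β)(x) = inf_h α(h) + β(h⁻¹x). -/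
open scoped ENNReal
open Filter

/-- Infimal convolution of graded subsets of a group. -/
noncomputable def gconv {G : Type*} [Group G] (α β : G → ℝ≥0∞) : G → ℝ≥0∞ :=
  fun x => ⨅ h : G, α h + β (h⁻¹ * x)

/-!
By Pettis' theorem, for every `r > 0` the set `{φ < r} * {φ < r}⁻¹` is a neighbourhood of `1`,
and on it `φ ⋄ φ^{⋄-1}` is below `2r`: if `y = a * b⁻¹` with `φ a, φ b < r`, take `h = a` in the
infimum defining the convolution.
-/

open scoped Pointwise Topology
open Set

theorem Filter.EventuallyEq.isMeagre_iff {X : Type*} [TopologicalSpace X] {s t : Set X}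
    (h : s =ᵇ t) : IsMeagre s ↔ IsMeagre t :=
  congr_sets (eventuallyEq_set.1 h.compl)

section Pettis

variable {G : Type*} [Group G] [TopologicalSpace G] [ContinuousMul G]

theorem Filter.EventuallyEq.smul_set {s t : Set G} (h : s =ᵇ t) (y : G) :
    y • s =ᵇ y • t := by
  have htr : Tendsto (y⁻¹ * ·) (residual G) (residual G) :=
    tendsto_residual_of_isOpenMap (continuous_const_mul _) (Homeomorph.mulLeft y⁻¹).isOpenMap
  simpa only [eventuallyEq_set, mem_smul_set_iff_inv_smul_mem, smul_eq_mul] using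
    htr.eventually (eventuallyEq_set.1 h)

variable [BaireSpace G]

theorem mul_inv_subset_mul_inv_of_residualEq {s u : Set G} (hu : IsOpen u) (hsu : s =ᵇ u) :
    u * u⁻¹ ⊆ s * s⁻¹ := by
  rintro _ ⟨a, ha, b, hb, rfl⟩
  have hopen : ¬ IsMeagre (u ∩ (a * b) • u) :=
    not_isMeagre_of_isOpen (hu.inter (hu.smul _)) ⟨a, ha, b⁻¹, hb, by simp⟩
  obtain ⟨z, hz, hz'⟩ := nonempty_of_not_isMeagre <|
    ((hsu.inter (hsu.smul_set (a * b))).isMeagre_iff).not.2 hopen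
  rw [mem_smul_set_iff_inv_smul_mem, smul_eq_mul] at hz'
  exact ⟨z, hz, ((a * b)⁻¹ * z)⁻¹, by simpa using hz', by group⟩

/-- Pettis' theorem. -/
theorem mul_inv_mem_nhds_one {s : Set G} (hs : BaireMeasurableSet s) (hnm : ¬ IsMeagre s) :
    s * s⁻¹ ∈ 𝓝 (1 : G) := by
  obtain ⟨u, hu, hsu⟩ := hs.residualEq_isOpen
  obtain ⟨x, hx⟩ : u.Nonempty := nonempty_of_not_isMeagre (hsu.isMeagre_iff.not.1 hnm)
  have hone : (1 : G) ∈ u * u⁻¹ := ⟨x, hx, x⁻¹, by simpa using hx, mul_inv_cancel x⟩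
  exact mem_of_superset (hu.mul_right.mem_nhds hone) (mul_inv_subset_mul_inv_of_residualEq hu hsu)

end Pettis

theorem gconv_mul_le {G : Type*} [Group G] (α β : G → ℝ≥0∞) (a b : G) :
    gconv α β (a * b) ≤ α a + β b :=
  (iInf_le _ a).trans_eq (by rw [inv_mul_cancel_left])

/-- If `φ` is a non-meagre Baire measurable graded subset of a Polish group `G`
(every strict sublevel set `{φ < r}`, `r > 0`, is non-meagre), then the
u.s.c. envelope of `φ ⋄ φ^{⋄-1}` vanishes at the identity:
`limsup_{y → 1} (φ ⋄ φ^{⋄-1})(y) = 0`. -/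
theorem nonmeagre_conv_interior_one {G : Type*} [Group G] [TopologicalSpace G]
    [IsTopologicalGroup G] [PolishSpace G] (φ : G → ℝ≥0∞)
    (hφ : BaireMeasurableFun φ)
    (hnm : ∀ r : ℝ≥0∞, 0 < r → ¬ IsMeagre {x : G | φ x < r}) :
    limsup (gconv φ (fun x => φ x⁻¹)) (nhds (1 : G)) = 0 := by
  refine Tendsto.limsup_eq (ENNReal.tendsto_nhds_zero.2 fun ε hε => ?_)
  have hr : 0 < ε / 2 := ENNReal.half_pos hε.ne'
  filter_upwards [mul_inv_mem_nhds_one (hφ _ measurableSet_Iio) (hnm _ hr)]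
    with y ⟨a, ha, b, hb, hy⟩
  rw [← hy]
  calc gconv φ (fun x => φ x⁻¹) (a * b) ≤ φ a + φ b⁻¹ := gconv_mul_le _ _ a b
    _ ≤ ε / 2 + ε / 2 := add_le_add ha.le hb.le
    _ = ε := ENNReal.add_halves ε
end
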